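/- The a_2^{(1)} vacuum reflection amplitude K_1^{b_{0,0}}(θ) = K_1(θ)·(1/2 − B/2)(3/2 − B/2)(3/2 + B/2)(5/2 + B/2), where K_1(θ) = (−2)(−1+B/2)(3−B/2) with h = 3 blocks, satisfies the boundary crossing-unitarity relation K_1^{b_{0,0}}(θ)·K_2^{b_{0,0}}(θ + iπ) = S_{11}(2θ), where K_2^{b_{0,0}} = K_1^{b_{0,0}} and S_{11}(θ) = (−2+B)(−B)(2), as an identity of meromorphic functions of θ. -/

import Mathlib

open Complex

/-- The building block with Coxeter number `h = 3`:
`(x)(θ) = sin(θ/(2i) + πx/6) / sin(θ/(2i) - πx/6)`. -/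
noncomputable def blk (h : ℕ) (x : ℝ) (θ : ℂ) : ℂ :=
  Complex.sin (θ / (2 * Complex.I) + ((Real.pi * x / (2 * h) : ℝ) : ℂ)) /
    Complex.sin (θ / (2 * Complex.I) - ((Real.pi * x / (2 * h) : ℝ) : ℂ))

/-- The `a_2^{(1)}` scattering amplitude `S_{11}(θ) = (-2+B)(-B)(2)`. -/
noncomputable def S11 (B : ℝ) (θ : ℂ) : ℂ :=
  blk 3 (-2 + B) θ * blk 3 (-B) θ * blk 3 2 θ

/-- The `(+++)` reflection amplitude `K_1(θ) = (-2)(-1+B/2)(3-B/2)`. -/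
noncomputable def K1 (B : ℝ) (θ : ℂ) : ℂ :=
  blk 3 (-2) θ * blk 3 (-1 + B / 2) θ * blk 3 (3 - B / 2) θ

/-- The `a_2^{(1)}` vacuum reflection amplitude for the solitonic boundary:
`K_1^{b_{0,0}}(θ) = K_1(θ)·(1/2-B/2)(3/2-B/2)(3/2+B/2)(5/2+B/2)`. -/
noncomputable def Kvac (B : ℝ) (θ : ℂ) : ℂ :=
  K1 B θ * blk 3 (1 / 2 - B / 2) θ * blk 3 (3 / 2 - B / 2) θ *
    blk 3 (3 / 2 + B / 2) θ * blk 3 (5 / 2 + B / 2) θ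

/-- Auxiliary quotient `Fq θ a = sin(θ/i + a)/sin(θ/i - a)`. -/
noncomputable def Fq (θ : ℂ) (a : ℝ) : ℂ :=
  Complex.sin (θ / Complex.I + (a : ℂ)) / Complex.sin (θ / Complex.I - (a : ℂ))

lemma Fq_neg (θ : ℂ) (h : ∀ x : ℝ, Complex.sin (θ / Complex.I + (x : ℂ)) ≠ 0) (a : ℝ) :
    Fq θ a * Fq θ (-a) = 1 := by
  unfold Fq
  have h1 : Complex.sin (θ / Complex.I + (a : ℂ)) ≠ 0 := h a
  have h2 : Complex.sin (θ / Complex.I - (a : ℂ)) ≠ 0 := by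
    have := h (-a); push_cast at this; rw [sub_eq_add_neg]; exact this
  push_cast
  rw [sub_neg_eq_add, ← sub_eq_add_neg, div_mul_div_comm,
    mul_comm (Complex.sin (θ / Complex.I - (a:ℂ)))]
  exact div_self (mul_ne_zero h1 h2)

lemma Fq_shift (θ : ℂ) (a : ℝ) : Fq θ (a + Real.pi) = Fq θ a := by
  unfold Fq
  push_cast
  rw [← add_assoc, Complex.sin_add_pi, show θ / Complex.I - ((a : ℂ) + Real.pi)
      = θ / Complex.I - a - Real.pi by ring, Complex.sin_sub_pi, neg_div_neg_eq]

lemma blk_pair (θ : ℂ)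
    (h : ∀ x : ℝ, Complex.sin (θ / (2 * Complex.I) + (x : ℂ)) ≠ 0) (x : ℝ) :
    blk 3 x θ * blk 3 x (θ + Real.pi * Complex.I) = Fq θ (Real.pi * x / 3) := by
  unfold blk Fq
  have hshift : (θ + (Real.pi : ℂ) * Complex.I) / (2 * Complex.I)
      = θ / (2 * Complex.I) + (Real.pi : ℂ) / 2 := by
    field_simp
  set A : ℂ := θ / (2 * Complex.I) with hA
  set a : ℂ := ((Real.pi * x / (2 * (3:ℕ)) : ℝ) : ℂ) with ha
  have ha' : a = ((Real.pi * x / 6 : ℝ) : ℂ) := by norm_num [ha]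
  have hc1 : Complex.sin ((θ + (Real.pi : ℂ) * Complex.I) / (2 * Complex.I) + a)
      = Complex.cos (A + a) := by
    rw [hshift, show A + (Real.pi : ℂ) / 2 + a = A + a + (Real.pi : ℂ) / 2 by ring,
      Complex.sin_add_pi_div_two]
  have hc2 : Complex.sin ((θ + (Real.pi : ℂ) * Complex.I) / (2 * Complex.I) - a)
      = Complex.cos (A - a) := by
    rw [hshift, show A + (Real.pi : ℂ) / 2 - a = A - a + (Real.pi : ℂ) / 2 by ring,
      Complex.sin_add_pi_div_two]
  rw [hc1, hc2]
  have h2A : θ / Complex.I = 2 * A := by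
    rw [hA]; field_simp
  have hsum : θ / Complex.I + ((Real.pi * x / 3 : ℝ) : ℂ) = 2 * (A + a) := by
    rw [h2A, ha']; push_cast; ring
  have hdiff : θ / Complex.I - ((Real.pi * x / 3 : ℝ) : ℂ) = 2 * (A - a) := by
    rw [h2A, ha']; push_cast; ring
  rw [hsum, hdiff, Complex.sin_two_mul, Complex.sin_two_mul]
  have hs : Complex.sin (A - a) ≠ 0 := by
    have := h (-(Real.pi * x / 6)); push_cast at this
    rw [ha', sub_eq_add_neg]; push_cast; exact this
  have hcden : Complex.cos (A - a) ≠ 0 := by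
    have := h (Real.pi / 2 - Real.pi * x / 6); push_cast at this
    rw [← Complex.sin_add_pi_div_two]
    rw [show A - a + (Real.pi : ℂ) / 2 = A + (((Real.pi : ℝ) : ℂ) / 2 - a) by ring, ha']
    push_cast
    convert this using 3
  field_simp

/-- the boundary crossing-unitarity relation
`K_1^{b_{0,0}}(θ) · K_2^{b_{0,0}}(θ + iπ) = S_{11}(2θ)` with `K_2^{b_{0,0}} = K_1^{b_{0,0}}`,
as an identity of meromorphic functions (stated at every `θ` where no relevant sine
vanishes). -/
theorem vacuum_crossing_unitarity (B : ℝ) (θ : ℂ)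
    (hθ : ∀ x : ℝ, Complex.sin (θ / (2 * Complex.I) + (x : ℂ)) ≠ 0 ∧
      Complex.sin (θ / Complex.I + (x : ℂ)) ≠ 0) :
    Kvac B θ * Kvac B (θ + Real.pi * Complex.I) = S11 B (2 * θ) := by
  have h1 : ∀ x : ℝ, Complex.sin (θ / (2 * Complex.I) + (x : ℂ)) ≠ 0 := fun x => (hθ x).1
  have h2 : ∀ x : ℝ, Complex.sin (θ / Complex.I + (x : ℂ)) ≠ 0 := fun x => (hθ x).2
  have P := blk_pair θ h1
  -- express blk at 2θ through Fq
  have hblk2 : ∀ y : ℝ, blk 3 y (2 * θ) = Fq θ (Real.pi * y / 6) := by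
    intro y
    unfold blk Fq
    have : (2 * θ) / (2 * Complex.I) = θ / Complex.I := by
      field_simp
    rw [this]
    norm_num
  unfold Kvac K1 S11
  rw [show
      blk 3 (-2) θ * blk 3 (-1 + B / 2) θ * blk 3 (3 - B / 2) θ *
        blk 3 (1 / 2 - B / 2) θ * blk 3 (3 / 2 - B / 2) θ * blk 3 (3 / 2 + B / 2) θ *
        blk 3 (5 / 2 + B / 2) θ *
      (blk 3 (-2) (θ + Real.pi * Complex.I) * blk 3 (-1 + B / 2) (θ + Real.pi * Complex.I) *
        blk 3 (3 - B / 2) (θ + Real.pi * Complex.I) *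
        blk 3 (1 / 2 - B / 2) (θ + Real.pi * Complex.I) *
        blk 3 (3 / 2 - B / 2) (θ + Real.pi * Complex.I) *
        blk 3 (3 / 2 + B / 2) (θ + Real.pi * Complex.I) *
        blk 3 (5 / 2 + B / 2) (θ + Real.pi * Complex.I)) =
      (blk 3 (-2) θ * blk 3 (-2) (θ + Real.pi * Complex.I)) *
      (blk 3 (-1 + B / 2) θ * blk 3 (-1 + B / 2) (θ + Real.pi * Complex.I)) *
      (blk 3 (3 - B / 2) θ * blk 3 (3 - B / 2) (θ + Real.pi * Complex.I)) *
      (blk 3 (1 / 2 - B / 2) θ * blk 3 (1 / 2 - B / 2) (θ + Real.pi * Complex.I)) *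
      (blk 3 (3 / 2 - B / 2) θ * blk 3 (3 / 2 - B / 2) (θ + Real.pi * Complex.I)) *
      (blk 3 (3 / 2 + B / 2) θ * blk 3 (3 / 2 + B / 2) (θ + Real.pi * Complex.I)) *
      (blk 3 (5 / 2 + B / 2) θ * blk 3 (5 / 2 + B / 2) (θ + Real.pi * Complex.I)) by ring]
  rw [P (-2), P (-1 + B / 2), P (3 - B / 2), P (1 / 2 - B / 2), P (3 / 2 - B / 2),
    P (3 / 2 + B / 2), P (5 / 2 + B / 2), hblk2 (-2 + B), hblk2 (-B), hblk2 2]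
  -- rewrite shifted arguments using Fq_shift
  have s1 : Fq θ (Real.pi * (-2) / 3) = Fq θ (Real.pi * 2 / 6) := by
    rw [show Real.pi * 2 / 6 = Real.pi * (-2) / 3 + Real.pi by ring, Fq_shift]
  have s2 : Fq θ (Real.pi * (3 - B / 2) / 3) = Fq θ (Real.pi * (-B) / 6 + Real.pi) := by
    congr 1; ring
  have s3 : Fq θ (Real.pi * (5 / 2 + B / 2) / 3) = Fq θ (-(Real.pi * (1 / 2 - B / 2) / 3) + Real.pi) := by
    congr 1; ring
  have s4 : Fq θ (Real.pi * (3 / 2 + B / 2) / 3) = Fq θ (-(Real.pi * (3 / 2 - B / 2) / 3) + Real.pi) := by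
    congr 1; ring
  have s5 : Fq θ (Real.pi * (-1 + B / 2) / 3) = Fq θ (Real.pi * (-2 + B) / 6) := by
    congr 1; ring
  rw [s1, s2, s3, s4, s5, Fq_shift, Fq_shift, Fq_shift]
  have n1 := Fq_neg θ h2 (Real.pi * (1 / 2 - B / 2) / 3)
  have n2 := Fq_neg θ h2 (Real.pi * (3 / 2 - B / 2) / 3)
  calc Fq θ (Real.pi * 2 / 6) * Fq θ (Real.pi * (-2 + B) / 6) * Fq θ (Real.pi * (-B) / 6) *
        Fq θ (Real.pi * (1 / 2 - B / 2) / 3) * Fq θ (Real.pi * (3 / 2 - B / 2) / 3) *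
        Fq θ (-(Real.pi * (3 / 2 - B / 2) / 3)) * Fq θ (-(Real.pi * (1 / 2 - B / 2) / 3))
      = Fq θ (Real.pi * (-2 + B) / 6) * Fq θ (Real.pi * (-B) / 6) * Fq θ (Real.pi * 2 / 6) *
        ((Fq θ (Real.pi * (1 / 2 - B / 2) / 3) * Fq θ (-(Real.pi * (1 / 2 - B / 2) / 3))) *
         (Fq θ (Real.pi * (3 / 2 - B / 2) / 3) * Fq θ (-(Real.pi * (3 / 2 - B / 2) / 3)))) := by
        ring
    _ = Fq θ (Real.pi * (-2 + B) / 6) * Fq θ (Real.pi * (-B) / 6) * Fq θ (Real.pi * 2 / 6) := by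
        rw [n1, n2]; ring
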